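/- Every unit of the ring R₁₂ can be written uniquely as a·Yⁿ for some nonzero real number a and some integer n (where Yⁿ for negative n means the corresponding power of the inverse of the unit Y); in particular the unit group of R₁₂ is isomorphic to ℝˣ × ℤ. -/

import Mathlib

noncomputable section

/-- The coordinate ring `R₁ = ℝ[X,Y]/(X²+Y²+1)` of the affine open `U₁ = D₊(z)` of the
real anisotropic conic `C = V(x²+y²+z²) ⊂ ℙ²_ℝ`. -/
def R1 : Type :=
  MvPolynomial (Fin 2) ℝ ⧸
    Ideal.span {(MvPolynomial.X 0 : MvPolynomial (Fin 2) ℝ) ^ 2 + MvPolynomial.X 1 ^ 2 + 1}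

instance : CommRing R1 := Ideal.Quotient.commRing _
instance : Algebra ℝ R1 := Ideal.Quotient.algebra ℝ

/-- `X`, the image of the first variable in `R₁` (the rational function `x/z`). -/
def X1 : R1 := Ideal.Quotient.mk _ (MvPolynomial.X 0)

/-- `Y`, the image of the second variable in `R₁` (the rational function `y/z`). -/
def Y1 : R1 := Ideal.Quotient.mk _ (MvPolynomial.X 1)

/-- `R₁₂ = R₁[Y⁻¹]`, the localization of `R₁` away from `Y`: the coordinate ring of
`U₁ ∩ U₂` where `U₂ = D₊(y)`. -/
abbrev R12 : Type := Localization.Away Y1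

/-- The image of `X` in `R₁₂`. -/
def X12 : R12 := algebraMap R1 R12 X1

/-- The image of `Y` in `R₁₂`. -/
def Y12 : R12 := algebraMap R1 R12 Y1

/-- `Y` as a unit of `R₁₂`. -/
def Yu : R12ˣ := (IsLocalization.Away.algebraMap_isUnit (S := R12) Y1).unit

/-- `A₁`, the image of `R₁` in `R₁₂`: the `ℝ`-subalgebra generated by `X` and `Y`. -/
def A1 : Subalgebra ℝ R12 := Algebra.adjoin ℝ {X12, Y12}

/-- `A₂`, the `ℝ`-subalgebra of `R₁₂` generated by `X·Y⁻¹` (i.e. `x/y`) and `Y⁻¹`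
(i.e. `z/y`); it is isomorphic to the coordinate ring `R₂` of `U₂`. -/
def A2 : Subalgebra ℝ R12 := Algebra.adjoin ℝ {X12 * (↑Yu⁻¹ : R12), (↑Yu⁻¹ : R12)}


namespace ConicAux
open Polynomial



abbrev P := Polynomial ℝ

def cpol : P := X ^ 2 + 1

def q : Polynomial P := X ^ 2 + C cpol

lemma q_monic : q.Monic := monic_X_pow_add_C _ (by norm_num)

lemma q_natDegree : q.natDegree = 2 := natDegree_X_pow_add_C

lemma q_degree : q.degree = 2 := degree_X_pow_add_C (by norm_num) _

lemma q_ne_zero : q ≠ 0 := q_monic.ne_zero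

-- irreducibility
lemma q_irred : Irreducible q := by
  rw [q_monic.irreducible_iff_irreducible_map_fraction_map (K := FractionRing P)]
  set φ := algebraMap P (FractionRing P)
  have : (q.map φ) = X ^ 2 - Polynomial.C (-(φ cpol)) := by
    simp [q, Polynomial.map_pow, sub_neg_eq_add]
  rw [this]
  apply X_pow_sub_C_irreducible_of_prime Nat.prime_two
  intro b hb
  obtain ⟨f, g, hg, hfg⟩ := IsFractionRing.div_surjective (A := P) b
  have hgP : g ≠ 0 := nonZeroDivisors.ne_zero hg
  have hg0 : φ g ≠ 0 := by
    simpa using (map_ne_zero_iff φ (IsFractionRing.injective P (FractionRing P))).mpr hgP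
  have h2 : φ (f ^ 2) = φ (-(cpol * g ^ 2)) := by
    have hthis : φ f = b * φ g := by
      field_simp at hfg
      exact (div_eq_iff hg0).mp hfg
    rw [map_pow, map_neg, map_mul, map_pow, hthis, mul_pow, hb]
    ring
  have h3 : f ^ 2 = -(cpol * g ^ 2) := IsFractionRing.injective P (FractionRing P) h2
  -- compare leading coefficients
  have hf0 : f ≠ 0 := by
    intro h
    rw [h] at h3
    have : cpol * g ^ 2 = 0 := by simpa using h3.symm
    have hc : cpol ≠ 0 := by
      intro hc
      have := congrArg (Polynomial.coeff · 2) hc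
      simp [cpol, coeff_one] at this
    exact (mul_ne_zero hc (pow_ne_zero _ hgP)) this
  have hlc := congrArg leadingCoeff h3
  rw [leadingCoeff_pow] at hlc
  have hcl : cpol.leadingCoeff = 1 := by
    have : cpol.Monic := monic_X_pow_add_C _ (by norm_num)
    exact this
  rw [leadingCoeff_neg, leadingCoeff_mul, hcl, leadingCoeff_pow, one_mul] at hlc
  have hfl : f.leadingCoeff ≠ 0 := leadingCoeff_ne_zero.mpr hf0
  have hgl : g.leadingCoeff ≠ 0 := leadingCoeff_ne_zero.mpr hgP
  have h1 : (0:ℝ) < f.leadingCoeff ^ 2 := by positivity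
  have h2' : -g.leadingCoeff ^ 2 < 0 := by
    have : (0:ℝ) < g.leadingCoeff ^ 2 := by positivity
    linarith
  rw [hlc] at h1
  linarith

lemma q_prime : Prime q := q_irred.prime

abbrev A := AdjoinRoot q

instance : IsDomain A := by
  have : (Ideal.span {q}).IsPrime := (Ideal.span_singleton_prime q_ne_zero).mpr q_prime
  exact Ideal.Quotient.isDomain_iff_prime _ |>.mpr this

def y : A := AdjoinRoot.root q

lemma y_sq : y ^ 2 = - AdjoinRoot.of q cpol := by
  have h : AdjoinRoot.mk q q = 0 := AdjoinRoot.mk_self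
  have h2 : AdjoinRoot.mk q (X ^ 2 + C cpol) = 0 := h
  rw [map_add, map_pow] at h2
  have hy : y ^ 2 = AdjoinRoot.mk q X ^ 2 := rfl
  have hof : AdjoinRoot.of q cpol = AdjoinRoot.mk q (C cpol) := rfl
  rw [hy, hof]
  exact eq_neg_of_add_eq_zero_left h2

lemma degree_lin_lt (a₀ a₁ : P) : (C a₀ + C a₁ * X).degree < 2 := by
  apply lt_of_le_of_lt (degree_add_le _ _)
  apply max_lt
  · exact lt_of_le_of_lt degree_C_le (by norm_num)
  · apply lt_of_le_of_lt (degree_mul_le _ _)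
    have h1 : (C a₁).degree ≤ 0 := degree_C_le
    have h2 : (X : Polynomial P).degree ≤ 1 := degree_X_le
    calc (C a₁).degree + (X : Polynomial P).degree ≤ 0 + 1 := add_le_add h1 h2
      _ < 2 := by norm_num

lemma indep {a₀ a₁ : P} (h : AdjoinRoot.of q a₀ + AdjoinRoot.of q a₁ * y = 0) :
    a₀ = 0 ∧ a₁ = 0 := by
  have hmk : AdjoinRoot.mk q (C a₀ + C a₁ * X) = 0 := by
    rw [map_add, map_mul]; exact h
  have hdvd : q ∣ (C a₀ + C a₁ * X) := AdjoinRoot.mk_eq_zero.mp hmk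
  have h0 : (C a₀ + C a₁ * X) = 0 :=
    eq_zero_of_dvd_of_degree_lt hdvd (by rw [q_degree]; exact degree_lin_lt a₀ a₁)
  constructor
  · have := congrArg (Polynomial.coeff · 0) h0
    simpa using this
  · have := congrArg (Polynomial.coeff · 1) h0
    simpa using this

lemma of_inj : Function.Injective (AdjoinRoot.of q) := by
  intro a b hab
  have : AdjoinRoot.of q (a - b) + AdjoinRoot.of q 0 * y = 0 := by
    rw [map_sub, map_zero, zero_mul, add_zero, sub_eq_zero]; exact hab
  exact sub_eq_zero.mp (indep this).1

lemma repr_exists (a : A) : ∃ a₀ a₁ : P, a = AdjoinRoot.of q a₀ + AdjoinRoot.of q a₁ * y := by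
  obtain ⟨f, rfl⟩ := AdjoinRoot.mk_surjective a
  refine ⟨(f %ₘ q).coeff 0, (f %ₘ q).coeff 1, ?_⟩
  have h1 : AdjoinRoot.mk q f = AdjoinRoot.mk q (f %ₘ q) := by
    rw [AdjoinRoot.mk_eq_mk]
    refine ⟨f /ₘ q, ?_⟩
    have := Polynomial.modByMonic_add_div f q
    linear_combination -this
  rw [h1]
  have hdeg : (f %ₘ q).degree ≤ 1 := by
    have := Polynomial.degree_modByMonic_lt f q_monic
    rw [q_degree] at this
    exact Order.le_of_lt_succ (by exact_mod_cast this)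
  have hr := Polynomial.eq_X_add_C_of_degree_le_one hdeg
  conv_lhs => rw [hr]
  rw [map_add, map_mul]
  have : (AdjoinRoot.mk q) X = y := rfl
  rw [this]
  rw [show ∀ r : P, (AdjoinRoot.mk q) (C r) = AdjoinRoot.of q r from fun r => rfl]
  rw [show ∀ r : P, (AdjoinRoot.mk q) (C r) = AdjoinRoot.of q r from fun r => rfl]
  ring

lemma cpol_ne_zero : cpol ≠ 0 := (monic_X_pow_add_C (1:ℝ) (by norm_num)).ne_zero

lemma cpol_natDegree : cpol.natDegree = 2 := by
  have : cpol = X ^ 2 + C 1 := by simp [cpol]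
  rw [this]; exact natDegree_X_pow_add_C

lemma cpol_leadingCoeff : cpol.leadingCoeff = 1 := monic_X_pow_add_C (1:ℝ) (by norm_num)

lemma norm_unit_aux {a₀ a₁ : P} (h : IsUnit (a₀ ^ 2 + a₁ ^ 2 * cpol)) :
    a₁ = 0 ∧ IsUnit a₀ := by
  have ha1 : a₁ = 0 := by
    by_contra h1
    set n₁ : P := a₁ ^ 2 * cpol with hn₁def
    have hn₁ : n₁.natDegree = 2 * a₁.natDegree + 2 := by
      rw [hn₁def, natDegree_mul (pow_ne_zero _ h1) cpol_ne_zero, natDegree_pow,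
        cpol_natDegree]
    set m := max (a₀ ^ 2).natDegree n₁.natDegree with hm
    have hm2 : 2 ≤ m := le_max_of_le_right (by omega)
    have hc1 : 0 ≤ (a₀ ^ 2).coeff m := by
      rcases eq_or_lt_of_le (le_max_left (a₀ ^ 2).natDegree n₁.natDegree) with he | hl
      · rw [hm, ← he, coeff_natDegree, leadingCoeff_pow]; positivity
      · rw [coeff_eq_zero_of_natDegree_lt (by omega : (a₀ ^ 2).natDegree < m)]
    have hcpos : 0 < (a₀ ^ 2 + n₁).coeff m := by
      rcases eq_or_lt_of_le (le_max_right (a₀ ^ 2).natDegree n₁.natDegree) with he | hl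
      · have h2 : n₁.coeff m = a₁.leadingCoeff ^ 2 := by
          rw [hm, ← he, coeff_natDegree, hn₁def, leadingCoeff_mul, leadingCoeff_pow,
            cpol_leadingCoeff, mul_one]
        have : a₁.leadingCoeff ≠ 0 := leadingCoeff_ne_zero.mpr h1
        rw [coeff_add, h2]
        have : 0 < a₁.leadingCoeff ^ 2 := by positivity
        linarith
      · have hz : n₁.coeff m = 0 := coeff_eq_zero_of_natDegree_lt hl
        have he : (a₀ ^ 2).natDegree = m := by
          rcases max_cases (a₀ ^ 2).natDegree n₁.natDegree with ⟨h', _⟩ | ⟨h', _⟩ <;> omega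
        have ha0 : a₀ ≠ 0 := by
          intro hz0
          rw [hz0] at he
          simp at he
          omega
        rw [coeff_add, hz, add_zero, ← he, coeff_natDegree, leadingCoeff_pow]

        have : a₀.leadingCoeff ≠ 0 := leadingCoeff_ne_zero.mpr ha0
        positivity
    have hle : m ≤ (a₀ ^ 2 + n₁).natDegree := le_natDegree_of_ne_zero (ne_of_gt hcpos)
    have := natDegree_eq_zero_of_isUnit h
    omega
  refine ⟨ha1, ?_⟩
  rw [ha1] at h
  simp only [zero_pow, ne_eq, OfNat.ofNat_ne_zero, not_false_eq_true, zero_mul, add_zero,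
    pow_two] at h
  exact isUnit_of_mul_isUnit_left h

def sigma : A →ₐ[P] A :=
  AdjoinRoot.liftAlgHom q (Algebra.ofId P A) (-y) (by
    have h0 : (Polynomial.aeval (-y)) q = 0 := by
      have : (Polynomial.aeval (-y)) q = (-y) ^ 2 + AdjoinRoot.of q cpol := by
        simp [q, AdjoinRoot.algebraMap_eq]
        rfl
      rw [this, neg_pow, y_sq]
      ring
    exact h0)

lemma sigma_of (r : P) : sigma (AdjoinRoot.of q r) = AdjoinRoot.of q r := by
  have := sigma.commutes r
  simpa [AdjoinRoot.algebraMap_eq] using this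

lemma sigma_root : sigma y = -y := by
  unfold sigma y
  apply AdjoinRoot.liftAlgHom_root

lemma units_of_A (u : Aˣ) : ∃ a : ℝ, a ≠ 0 ∧ (u : A) = algebraMap ℝ A a := by
  obtain ⟨a₀, a₁, hu⟩ := repr_exists (u : A)
  obtain ⟨b₀, b₁, hv⟩ := repr_exists ((u⁻¹ : Aˣ) : A)
  set of := AdjoinRoot.of q
  have hN : ∀ c₀ c₁ : P, (of c₀ + of c₁ * y) * sigma (of c₀ + of c₁ * y)
      = of (c₀ ^ 2 + c₁ ^ 2 * cpol) := by
    intro c₀ c₁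
    rw [map_add, map_mul, sigma_of, sigma_of, sigma_root]
    have : (of c₀ + of c₁ * y) * (of c₀ + of c₁ * -y)
        = of c₀ * of c₀ - of c₁ * of c₁ * y ^ 2 := by ring
    rw [this, y_sq, map_add, map_pow, map_mul, map_pow]
    ring
  have huv : ((u : A) * sigma (u : A)) * (((u⁻¹ : Aˣ) : A) * sigma ((u⁻¹ : Aˣ) : A)) = 1 := by
    have h1 : (u : A) * ((u⁻¹ : Aˣ) : A) = 1 := u.mul_inv
    have h2 : sigma (u : A) * sigma ((u⁻¹ : Aˣ) : A) = 1 := by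
      rw [← map_mul, h1, map_one]
    calc ((u : A) * sigma (u : A)) * (((u⁻¹ : Aˣ) : A) * sigma ((u⁻¹ : Aˣ) : A))
        = ((u : A) * ((u⁻¹ : Aˣ) : A)) * (sigma (u : A) * sigma ((u⁻¹ : Aˣ) : A)) := by ring
      _ = 1 := by rw [h1, h2, mul_one]
  rw [hu, hv, hN, hN, ← map_mul] at huv
  have h1 : (a₀ ^ 2 + a₁ ^ 2 * cpol) * (b₀ ^ 2 + b₁ ^ 2 * cpol) = 1 := by
    apply of_inj
    rw [huv, map_one]
  have hunit : IsUnit (a₀ ^ 2 + a₁ ^ 2 * cpol) := IsUnit.of_mul_eq_one _ h1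
  obtain ⟨ha1, ha0⟩ := norm_unit_aux hunit
  obtain ⟨r, hr, hra⟩ := Polynomial.isUnit_iff.mp ha0
  refine ⟨r, hr.ne_zero, ?_⟩
  rw [hu, ha1, map_zero, zero_mul, add_zero, ← hra]
  rfl

lemma y_ne_zero : y ≠ 0 := by
  intro h
  have : AdjoinRoot.of q (0 : P) + AdjoinRoot.of q (1 : P) * y = 0 := by
    rw [h, map_zero, mul_zero, add_zero]
  exact one_ne_zero ((indep this).2)

def phi : P →+* ℂ := (Polynomial.aeval Complex.I).toRingHom

lemma phi_cpol : phi cpol = 0 := by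
  simp [phi, cpol]

lemma q_eval₂ : q.eval₂ phi 0 = 0 := by
  simp [q, phi_cpol]

def psi : A →+* ℂ := AdjoinRoot.lift phi 0 q_eval₂

lemma cpol_monic : cpol.Monic := by
  have : cpol = X ^ 2 + C 1 := by simp [cpol]
  rw [this]; exact monic_X_pow_add_C _ (by norm_num)

lemma psi_of (r : P) : psi (AdjoinRoot.of q r) = phi r := by
  unfold psi; exact AdjoinRoot.lift_of _

lemma psi_y : psi y = 0 := by
  unfold psi y; exact AdjoinRoot.lift_root _

lemma psi_surj : Function.Surjective psi := by
  intro z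
  refine ⟨AdjoinRoot.of q (C z.re + C z.im * X), ?_⟩
  rw [psi_of]
  simp [phi]

lemma ker_psi : RingHom.ker psi = Ideal.span {y} := by
  apply le_antisymm
  · intro a ha
    obtain ⟨a₀, a₁, rfl⟩ := repr_exists a
    rw [RingHom.mem_ker, map_add, map_mul, psi_of, psi_of, psi_y, mul_zero, add_zero] at ha
    -- ha : phi a₀ = 0
    have hdvd : cpol ∣ a₀ := by
      rw [← Polynomial.modByMonic_eq_zero_iff_dvd cpol_monic]
      set r := a₀ %ₘ cpol with hr
      have hdeg : r.degree ≤ 1 := by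
        have := Polynomial.degree_modByMonic_lt a₀ cpol_monic
        have h2 : cpol.degree = 2 := by
          have : cpol = X ^ 2 + C 1 := by simp [cpol]
          rw [this]; exact degree_X_pow_add_C (by norm_num) _
        rw [h2] at this
        exact Order.le_of_lt_succ (by exact_mod_cast this)
      have haev : phi r = 0 := by
        have := Polynomial.modByMonic_add_div a₀ cpol
        have h3 : phi a₀ = phi r + phi cpol * phi (a₀ /ₘ cpol) := by
          rw [← map_mul, ← map_add, this]
        rw [ha, phi_cpol, zero_mul, add_zero] at h3
        exact h3.symm
      have hrX := Polynomial.eq_X_add_C_of_degree_le_one hdeg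
      rw [hrX] at haev
      simp only [phi, map_add, map_mul, AlgHom.toRingHom_eq_coe, RingHom.coe_coe,
        Polynomial.aeval_C, Polynomial.aeval_X] at haev
      have hre := congrArg Complex.re haev
      have him := congrArg Complex.im haev
      simp [Complex.add_re, Complex.add_im, Complex.mul_re, Complex.mul_im] at hre him
      rw [hrX]
      simp [hre, him]
    obtain ⟨h₀, hh₀⟩ := hdvd
    have : AdjoinRoot.of q a₀ = -(y * (y * AdjoinRoot.of q h₀)) := by
      rw [hh₀, map_mul]
      have hy2 : AdjoinRoot.of q cpol = -(y * y) := by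
        rw [← pow_two, y_sq, neg_neg]
      rw [hy2]; ring
    refine Ideal.add_mem _ ?_ ?_
    · rw [this]
      exact neg_mem (Ideal.mul_mem_right _ _ (Ideal.subset_span rfl))
    · rw [mul_comm]
      exact Ideal.mul_mem_right _ _ (Ideal.subset_span rfl)
  · rw [Ideal.span_le]
    intro x hx
    rw [Set.mem_singleton_iff] at hx
    rw [hx, SetLike.mem_coe, RingHom.mem_ker]
    exact psi_y

lemma prime_y : Prime y := by
  have hmax : (Ideal.span {y}).IsMaximal := by
    rw [← ker_psi]
    exact RingHom.ker_isMaximal_of_surjective psi psi_surj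
  exact (Ideal.span_singleton_prime y_ne_zero).mp hmax.isPrime


-- ## Transfer to R1

abbrev M2 := MvPolynomial (Fin 2) ℝ

def pmv : M2 := MvPolynomial.X 0 ^ 2 + MvPolynomial.X 1 ^ 2 + 1

def e : M2 ≃ₐ[ℝ] Polynomial P :=
  (MvPolynomial.renameEquiv ℝ (Equiv.swap 0 1)).trans
    ((MvPolynomial.finSuccEquiv ℝ 1).trans
      (Polynomial.mapAlgEquiv ((MvPolynomial.renameEquiv ℝ (Equiv.equivPUnit.{1,1} (Fin 1))).trans
        (MvPolynomial.pUnitAlgEquiv ℝ))))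

lemma e_X0 : e (MvPolynomial.X 0) = C X := by
  simp only [e, AlgEquiv.trans_apply, MvPolynomial.renameEquiv_apply, MvPolynomial.rename_X]
  rw [show (Equiv.swap (0 : Fin 2) 1) 0 = 1 from rfl,
    show (1 : Fin 2) = (0 : Fin 1).succ from rfl, MvPolynomial.finSuccEquiv_X_succ]
  simp

lemma e_X1 : e (MvPolynomial.X 1) = X := by
  simp only [e, AlgEquiv.trans_apply, MvPolynomial.renameEquiv_apply, MvPolynomial.rename_X]
  rw [show (Equiv.swap (0 : Fin 2) 1) 1 = 0 from rfl, MvPolynomial.finSuccEquiv_X_zero]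
  simp

lemma e_p : e pmv = q := by
  unfold pmv q cpol
  rw [map_add, map_add, map_pow, map_pow, map_one, e_X0, e_X1]
  rw [map_add, map_pow]
  push_cast [Polynomial.C_1]
  ring

lemma ideal_map :
    Ideal.span {q} = (Ideal.span {pmv}).map (e : M2 →+* Polynomial P) := by
  rw [Ideal.map_span, Set.image_singleton]
  norm_num [e_p]

def rho : R1 ≃+* A :=
  Ideal.quotientEquiv _ _ (e : M2 ≃+* Polynomial P) ideal_map

lemma rho_mk (r : M2) :
    rho (Ideal.Quotient.mk _ r) = AdjoinRoot.mk q (e r) :=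
  Ideal.quotientEquiv_mk _ _ _ _ r

lemma rho_Y1 : rho Y1 = y := by
  rw [Y1, rho_mk]
  rw [show (AdjoinRoot.mk q) (e (MvPolynomial.X 1)) = AdjoinRoot.mk q X by rw [e_X1]]
  rfl

lemma rho_algebraMap (a : ℝ) : rho (algebraMap ℝ R1 a) = algebraMap ℝ A a := by
  have h1 : algebraMap ℝ R1 a = Ideal.Quotient.mk _ (MvPolynomial.C a) := rfl
  rw [h1, rho_mk]
  have h2 : e (MvPolynomial.C a) = Polynomial.C (Polynomial.C a) := by
    have := e.commutes a
    simpa [Polynomial.algebraMap_apply, MvPolynomial.algebraMap_eq] using this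
  rw [h2]
  rfl

instance : IsDomain R1 := MulEquiv.isDomain A (rho : R1 ≃* A)

lemma prime_Y1 : Prime Y1 := by
  rw [← MulEquiv.prime_iff (rho.toMulEquiv)]
  rw [show rho.toMulEquiv Y1 = y from rho_Y1]
  exact prime_y

lemma Y1_ne_zero : Y1 ≠ 0 := by
  intro h
  apply y_ne_zero
  rw [← rho_Y1, h, map_zero]

lemma units_R1 (u : R1ˣ) : ∃ a : ℝ, a ≠ 0 ∧ (u : R1) = algebraMap ℝ R1 a := by
  obtain ⟨a, ha, h⟩ := units_of_A (Units.map (rho : R1 →* A) u)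
  refine ⟨a, ha, ?_⟩
  apply rho.injective
  rw [rho_algebraMap]
  rw [Units.coe_map] at h
  exact h

-- ## The localization

lemma powers_le : Submonoid.powers Y1 ≤ nonZeroDivisors R1 :=
  powers_le_nonZeroDivisors_of_noZeroDivisors Y1_ne_zero

lemma inj_loc : Function.Injective (algebraMap R1 R12) :=
  IsLocalization.injective R12 powers_le

instance : Nontrivial R12 := inj_loc.nontrivial

lemma inj_R : Function.Injective (algebraMap ℝ R12) :=
  (algebraMap ℝ R12).injective

lemma Yu_coe : (Yu : R12) = algebraMap R1 R12 Y1 :=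
  (IsLocalization.Away.algebraMap_isUnit (S := R12) Y1).unit_spec

lemma Yu_pow_coe (n : ℕ) : ((Yu ^ n : R12ˣ) : R12) = algebraMap R1 R12 (Y1 ^ n) := by
  rw [Units.val_pow_eq_pow_val, Yu_coe, map_pow]

/-- real units of `R12`, as units -/
def ru (c : ℝˣ) : R12ˣ := Units.map (algebraMap ℝ R12).toMonoidHom c

lemma ru_coe (c : ℝˣ) : (ru c : R12) = algebraMap ℝ R12 (c : ℝ) := rfl

lemma key_nat (n : ℕ) (c : ℝˣ) (h : Yu ^ (n : ℤ) = ru c) : n = 0 := by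
  by_contra hn
  have hcoe : ((Yu ^ (n:ℤ) : R12ˣ) : R12) = algebraMap ℝ R12 (c : ℝ) := by
    rw [h, ru_coe]
  rw [zpow_natCast, Yu_pow_coe] at hcoe
  have h2 : algebraMap ℝ R12 (c : ℝ) = algebraMap R1 R12 (algebraMap ℝ R1 (c : ℝ)) := by
    rw [← RingHom.comp_apply, ← IsScalarTower.algebraMap_eq]
  rw [h2] at hcoe
  have h3 : Y1 ^ n = algebraMap ℝ R1 (c : ℝ) := inj_loc hcoe
  have h4 : IsUnit (Y1 ^ n) := by
    rw [h3]
    exact ⟨Units.map (algebraMap ℝ R1).toMonoidHom c, rfl⟩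
  exact prime_Y1.not_unit ((isUnit_pow_iff hn).mp h4)

lemma key (k : ℤ) (c : ℝˣ) (h : Yu ^ k = ru c) : k = 0 := by
  rcases k with n | n
  · rw [Int.ofNat_eq_natCast] at h
    rw [key_nat n c h]
    rfl
  · exfalso
    have h2 : Yu ^ ((n + 1 : ℕ) : ℤ) = ru c⁻¹ := by
      have : (Yu ^ (Int.negSucc n))⁻¹ = (ru c)⁻¹ := by rw [h]
      rw [← zpow_neg] at this
      rw [show (((n + 1 : ℕ)) : ℤ) = -Int.negSucc n by rw [Int.negSucc_eq]; push_cast; ring]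
      rw [this, ru, ru, ← MonoidHom.map_inv]
    have := key_nat (n + 1) c⁻¹ h2
    omega

lemma existence (u : R12ˣ) : ∃ a : ℝ, ∃ nn : ℤ, a ≠ 0 ∧
    (u : R12) = algebraMap ℝ R12 a * ((Yu ^ nn : R12ˣ) : R12) := by
  obtain ⟨⟨f, ym⟩, hf⟩ := IsLocalization.surj (Submonoid.powers Y1) (u : R12)
  obtain ⟨n, hn⟩ := ym.2
  obtain ⟨⟨g, ym'⟩, hg⟩ := IsLocalization.surj (Submonoid.powers Y1) ((u⁻¹ : R12ˣ) : R12)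
  obtain ⟨m, hm⟩ := ym'.2
  simp only at hf hg
  rw [← hn] at hf
  rw [← hm] at hg
  dsimp only at hf hg
  -- f * g = Y1 ^ (n + m)
  have hfg : f * g = Y1 ^ (n + m) := by
    apply inj_loc
    rw [map_mul, ← hf, ← hg, map_pow, pow_add, map_mul, map_pow, map_pow]
    have : (u : R12) * ((u⁻¹ : R12ˣ) : R12) = 1 := by
      rw [← Units.val_mul, mul_inv_cancel, Units.val_one]
    calc (u:R12) * algebraMap R1 R12 Y1 ^ n * ((u⁻¹:R12ˣ) * algebraMap R1 R12 Y1 ^ m)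
        = ((u:R12) * ((u⁻¹ : R12ˣ) : R12)) *
            (algebraMap R1 R12 Y1 ^ n * algebraMap R1 R12 Y1 ^ m) := by ring
      _ = _ := by rw [this, one_mul]
  have hdvd : f ∣ Y1 ^ (n + m) := ⟨g, hfg.symm⟩
  obtain ⟨i, hi, w, hw⟩ : ∃ i ≤ n + m, ∃ w : R1ˣ, f * w = Y1 ^ i := by
    obtain ⟨i, hi, hass⟩ := (dvd_prime_pow prime_Y1 (n + m)).mp hdvd
    obtain ⟨w, hw⟩ := hass
    exact ⟨i, hi, w, hw⟩
  obtain ⟨a, ha, haw⟩ := units_R1 w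
  -- unit-level equation
  have hYui : ((Yu ^ (i : ℤ) : R12ˣ) : R12) = algebraMap R1 R12 (Y1 ^ i) := by
    rw [zpow_natCast, Yu_pow_coe]
  have hYun : ((Yu ^ (n : ℤ) : R12ˣ) : R12) = algebraMap R1 R12 (Y1 ^ n) := by
    rw [zpow_natCast, Yu_pow_coe]
  refine ⟨a⁻¹, (i : ℤ) - (n : ℤ), inv_ne_zero ha, ?_⟩
  set au : ℝˣ := Units.mk0 a ha with hau
  have hmain : (u : R12) * ((Yu ^ (n:ℤ) : R12ˣ) : R12) * algebraMap ℝ R12 a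
      = ((Yu ^ (i:ℤ) : R12ˣ) : R12) := by
    rw [hYun, hYui, ← hw, map_mul]
    have h2 : algebraMap R1 R12 (w : R1) = algebraMap ℝ R12 a := by
      rw [haw, ← RingHom.comp_apply, ← IsScalarTower.algebraMap_eq]
    rw [← h2, hf]
  have humain : u * Yu ^ (n:ℤ) * ru au = Yu ^ (i:ℤ) := by
    apply Units.ext
    rw [Units.val_mul, Units.val_mul, ru_coe, hau]
    exact hmain
  have hu_units : u = ru au⁻¹ * Yu ^ ((i:ℤ) - (n:ℤ)) := by
    have h3 : u = Yu ^ (i:ℤ) * (ru au)⁻¹ * (Yu ^ (n:ℤ))⁻¹ := by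
      rw [← humain]
      group
    rw [h3, zpow_sub]
    have h4 : (ru au)⁻¹ = ru au⁻¹ := (map_inv (Units.map (algebraMap ℝ R12).toMonoidHom) au).symm
    rw [h4, mul_comm (Yu ^ (i:ℤ)) (ru au⁻¹), mul_assoc]
  rw [hu_units, Units.val_mul, ru_coe]
  norm_num [hau]

lemma uniqueness {a b : ℝ} {n m : ℤ} (ha : a ≠ 0) (hb : b ≠ 0)
    (h : algebraMap ℝ R12 a * ((Yu ^ n : R12ˣ) : R12)
       = algebraMap ℝ R12 b * ((Yu ^ m : R12ˣ) : R12)) :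
    a = b ∧ n = m := by
  set au : ℝˣ := Units.mk0 a ha with hau
  set bu : ℝˣ := Units.mk0 b hb with hbu
  have hunits : ru au * Yu ^ n = ru bu * Yu ^ m := by
    apply Units.ext
    rw [Units.val_mul, Units.val_mul, ru_coe, ru_coe]
    exact h
  have hz : Yu ^ (n - m) = ru (bu / au) := by
    have hdiv : ru (bu / au) = ru bu / ru au :=
      map_div (Units.map (algebraMap ℝ R12).toMonoidHom) bu au
    rw [zpow_sub, hdiv, ← div_eq_mul_inv, div_eq_div_iff_mul_eq_mul, mul_comm]
    exact hunits
  have hnm : n - m = 0 := key _ _ hz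
  have hnm' : n = m := by omega
  rw [hnm'] at hunits
  have hru : ru au = ru bu := mul_right_cancel hunits
  have : algebraMap ℝ R12 a = algebraMap ℝ R12 b := by
    have := congrArg (Units.val) hru
    rw [ru_coe, ru_coe] at this
    simpa [hau, hbu] using this
  exact ⟨inj_R this, hnm'⟩

def g : ℝˣ × Multiplicative ℤ →* R12ˣ :=
  MonoidHom.coprod (Units.map (algebraMap ℝ R12).toMonoidHom) ((zpowersHom R12ˣ) Yu)

lemma g_apply (c : ℝˣ) (nn : ℤ) :
    ((g (c, Multiplicative.ofAdd nn) : R12ˣ) : R12)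
      = algebraMap ℝ R12 (c : ℝ) * ((Yu ^ nn : R12ˣ) : R12) := by
  rw [g, MonoidHom.coprod_apply, Units.val_mul]
  rfl

lemma g_bij : Function.Bijective g := by
  constructor
  · rintro ⟨c, nn⟩ ⟨d, mm⟩ hcd
    have h1 : ((g (c, nn) : R12ˣ) : R12) = ((g (d, mm) : R12ˣ) : R12) := by rw [hcd]
    rw [show nn = Multiplicative.ofAdd (Multiplicative.toAdd nn) from rfl] at h1
    rw [show mm = Multiplicative.ofAdd (Multiplicative.toAdd mm) from rfl] at h1
    rw [g_apply, g_apply] at h1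
    obtain ⟨hab, hnm⟩ := uniqueness c.ne_zero d.ne_zero h1
    have : c = d := Units.ext hab
    rw [this]
    have : nn = mm := hnm
    rw [this]
  · intro u
    obtain ⟨a, nn, ha, heq⟩ := existence u
    refine ⟨(Units.mk0 a ha, Multiplicative.ofAdd nn), ?_⟩
    apply Units.ext
    rw [g_apply]
    exact heq.symm

end ConicAux


/-- every unit of `R₁₂` can be written uniquely as `a·Yⁿ` for a nonzero
real number `a` and an integer `n`; in particular `R₁₂ˣ ≅ ℝˣ × ℤ`. -/
theorem statement_5 :
    (∀ u : R12ˣ, ∃! p : ℝ × ℤ,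
      p.1 ≠ 0 ∧ (u : R12) = algebraMap ℝ R12 p.1 * ((Yu ^ p.2 : R12ˣ) : R12)) ∧
    Nonempty (R12ˣ ≃* ℝˣ × Multiplicative ℤ) := by
  constructor
  · intro u
    obtain ⟨a, nn, ha, heq⟩ := ConicAux.existence u
    refine ⟨(a, nn), ⟨ha, heq⟩, ?_⟩
    rintro ⟨b, mm⟩ ⟨hb, heq'⟩
    obtain ⟨hab, hnm⟩ := ConicAux.uniqueness hb ha (heq'.symm.trans heq)
    simp only [Prod.mk.injEq]
    exact ⟨hab, hnm⟩
  · exact ⟨(MulEquiv.ofBijective ConicAux.g ConicAux.g_bij).symm⟩
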